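/- Conservation of total energy for resistive compressible MHD (Proposition 1a, spatially periodic setting): Let n, T : ℝ × ℝ³ → ℝ and V, B : ℝ × ℝ³ → ℝ³ be smooth and ℤ³-periodic in x, with n(t,x) > 0 everywhere, and let m_i > 0, μ₀ > 0, γ > 1, η ≥ 0 be constants. Define the diagnostic fields j := μ₀⁻¹ curl B and E := −V × B + η j. Assume that for all (t,x): (i) ∂ₜn + div(nV) = 0; (ii) ∂ₜV + (curl V) × V + ½∇|V|² + (m_i n)⁻¹ ∇(nT) − (m_i n)⁻¹ j × B = 0; (iii) (n/(γ−1))(∂ₜT + V·∇T) + nT div V = η|j|²; (iv) ∂ₜB + curl E = 0. Then the total energy H(t) = ∫_Q ( ½ m_i n |V|² + nT/(γ−1) + |B|²/(2μ₀) ) dx is constant in t, i.e. its time derivative is zero for all t. -/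

import Mathlib

open MeasureTheory

noncomputable section

/-- Points of ℝ³. -/
abbrev V3 := Fin 3 → ℝ

/-- Euclidean inner product on ℝ³. -/
def dot (u v : V3) : ℝ := ∑ i, u i * v i

/-- Cross product on ℝ³. -/
def cross (u v : V3) : V3 :=
  ![u 1 * v 2 - u 2 * v 1, u 2 * v 0 - u 0 * v 2, u 0 * v 1 - u 1 * v 0]

/-- i-th partial derivative of a scalar field. -/
def pd (i : Fin 3) (f : V3 → ℝ) (x : V3) : ℝ := fderiv ℝ f x (Pi.single i 1)

/-- Gradient of a scalar field. -/
def grad (f : V3 → ℝ) (x : V3) : V3 := fun i => pd i f x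

/-- Divergence of a vector field. -/
def div3 (u : V3 → V3) (x : V3) : ℝ := ∑ i, pd i (fun y => u y i) x

/-- Curl of a vector field. -/
def curl3 (u : V3 → V3) (x : V3) : V3 :=
  ![pd 1 (fun y => u y 2) x - pd 2 (fun y => u y 1) x,
    pd 2 (fun y => u y 0) x - pd 0 (fun y => u y 2) x,
    pd 0 (fun y => u y 1) x - pd 1 (fun y => u y 0) x]

/-- ℤ³-periodicity. -/
def Periodic3 {α : Type*} (f : V3 → α) : Prop :=
  ∀ (x : V3) (k : Fin 3 → ℤ), f (x + fun i => (k i : ℝ)) = f x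

/-- The unit cube Q = [0,1]³. -/
def Q3 : Set V3 := Set.Icc 0 1

/-- Current density $j = \mu_0^{-1} \nabla \times B$. -/
def jfield (μ₀ : ℝ) (B : ℝ × V3 → V3) (t : ℝ) (x : V3) : V3 :=
  μ₀⁻¹ • curl3 (fun y => B (t, y)) x

/-- Electric field $E = -V \times B + \eta j$. -/
def Efield (μ₀ η : ℝ) (V B : ℝ × V3 → V3) (t : ℝ) (x : V3) : V3 :=
  - cross (V (t, x)) (B (t, x)) + η • jfield μ₀ B t x

/-!
Along a solution, the energy density `e = ½ mᵢ n |V|² + n T / (γ - 1) + |B|² / (2 μ₀)` obeys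
the local conservation law `∂ₜ e + div F = 0`, where `F` is the sum of the kinetic energy flux,
the enthalpy flux and the Poynting flux `E × B / μ₀`. Indeed the kinetic, internal and magnetic
energies each satisfy a balance law and their sources cancel: the pressure work `V ⬝ ∇(n T)` is
exchanged between kinetic and internal energy, and `E ⬝ j = V ⬝ (j × B) + η |j|²` splits the
magnetic loss into the Lorentz work gained by the fluid and the Joule heat. Differentiating under
the integral over the compact cube gives `H' = -∫_Q div F`, which vanishes by the divergence
theorem: `F` is periodic, so its fluxes through opposite faces of `Q` cancel.
-/

open scoped Matrix ContDiff

theorem dot_eq_dotProduct (u v : V3) : dot u v = u ⬝ᵥ v := rfl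

theorem cross_eq_crossProduct (u v : V3) : cross u v = u ⨯₃ v := rfl

@[fun_prop] theorem ContDiff.dot {E : Type*} [NormedAddCommGroup E] [NormedSpace ℝ E]
    {k : WithTop ℕ∞} {u v : E → V3} (hu : ContDiff ℝ k u) (hv : ContDiff ℝ k v) :
    ContDiff ℝ k (fun y => dot (u y) (v y)) := by
  unfold _root_.dot; fun_prop

@[fun_prop] theorem ContDiff.cross {E : Type*} [NormedAddCommGroup E] [NormedSpace ℝ E]
    {k : WithTop ℕ∞} {u v : E → V3} (hu : ContDiff ℝ k u) (hv : ContDiff ℝ k v) :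
    ContDiff ℝ k (fun y => cross (u y) (v y)) :=
  contDiff_pi.2 fun i => by
    fin_cases i <;> simp only [_root_.cross, Fin.zero_eta, Fin.mk_one, Fin.reduceFinMk,
      Matrix.cons_val_zero, Matrix.cons_val_one, Matrix.cons_val] <;> fun_prop

@[fun_prop] theorem DifferentiableAt.dot {E : Type*} [NormedAddCommGroup E] [NormedSpace ℝ E]
    {u v : E → V3} {x : E} (hu : DifferentiableAt ℝ u x) (hv : DifferentiableAt ℝ v x) :
    DifferentiableAt ℝ (fun y => dot (u y) (v y)) x := by
  unfold _root_.dot; fun_prop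

@[fun_prop] theorem DifferentiableAt.cross {E : Type*} [NormedAddCommGroup E] [NormedSpace ℝ E]
    {u v : E → V3} {x : E} (hu : DifferentiableAt ℝ u x) (hv : DifferentiableAt ℝ v x) :
    DifferentiableAt ℝ (fun y => cross (u y) (v y)) x :=
  differentiableAt_pi.2 fun i => by
    fin_cases i <;> simp only [_root_.cross, Fin.zero_eta, Fin.mk_one, Fin.reduceFinMk,
      Matrix.cons_val_zero, Matrix.cons_val_one, Matrix.cons_val] <;> fun_prop

theorem dot_Efield_jfield (μ₀ η : ℝ) (V B : ℝ × V3 → V3) (t : ℝ) (x : V3) :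
    dot (Efield μ₀ η V B t x) (jfield μ₀ B t x)
      = dot (V (t, x)) (cross (jfield μ₀ B t x) (B (t, x)))
        + η * dot (jfield μ₀ B t x) (jfield μ₀ B t x) := by
  simp only [Efield, dot_eq_dotProduct, cross_eq_crossProduct, add_dotProduct, neg_dotProduct,
    smul_dotProduct, smul_eq_mul]
  rw [dotProduct_comm, triple_product_permutation, ← cross_anticomm, dotProduct_neg]
  ring

section Calculus

variable {f g : V3 → ℝ} {u v : V3 → V3} {x : V3}

theorem pd_add (i : Fin 3) (hf : DifferentiableAt ℝ f x) (hg : DifferentiableAt ℝ g x) :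
    pd i (fun y => f y + g y) x = pd i f x + pd i g x := by
  simp [pd, fderiv_fun_add hf hg]

theorem pd_sub (i : Fin 3) (hf : DifferentiableAt ℝ f x) (hg : DifferentiableAt ℝ g x) :
    pd i (fun y => f y - g y) x = pd i f x - pd i g x := by
  simp [pd, fderiv_fun_sub hf hg]

theorem pd_mul (i : Fin 3) (hf : DifferentiableAt ℝ f x) (hg : DifferentiableAt ℝ g x) :
    pd i (fun y => f y * g y) x = pd i f x * g x + f x * pd i g x := by
  simp only [pd, fderiv_fun_mul hf hg, add_apply, smul_apply, smul_eq_mul]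
  ring

theorem pd_const_mul (i : Fin 3) (c : ℝ) (hf : DifferentiableAt ℝ f x) :
    pd i (fun y => c * f y) x = c * pd i f x := by
  simp [pd, fderiv_const_mul hf]

theorem pd_apply_eq_fderiv (i j : Fin 3) (hu : DifferentiableAt ℝ u x) :
    pd i (fun y => u y j) x = fderiv ℝ u x (Pi.single i 1) j := by
  simp [pd, fderiv_apply hu]

theorem grad_mul (hf : DifferentiableAt ℝ f x) (hg : DifferentiableAt ℝ g x) :
    grad (fun y => f y * g y) x = g x • grad f x + f x • grad g x := by
  ext i
  simp only [grad, pd_mul i hf hg, Pi.add_apply, Pi.smul_apply, smul_eq_mul]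
  ring

theorem grad_const_mul (c : ℝ) (hf : DifferentiableAt ℝ f x) :
    grad (fun y => c * f y) x = c • grad f x := by
  ext i
  simp [grad, pd_const_mul i c hf]

theorem div3_add (hu : DifferentiableAt ℝ u x) (hv : DifferentiableAt ℝ v x) :
    div3 (fun y => u y + v y) x = div3 u x + div3 v x := by
  simp only [div3, Pi.add_apply, ← Finset.sum_add_distrib]
  exact Finset.sum_congr rfl fun i _ =>
    pd_add i (differentiableAt_pi.1 hu i) (differentiableAt_pi.1 hv i)

theorem div3_smul (hf : DifferentiableAt ℝ f x) (hu : DifferentiableAt ℝ u x) :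
    div3 (fun y => f y • u y) x = dot (grad f x) (u x) + f x * div3 u x := by
  simp only [div3, dot, grad, Pi.smul_apply, smul_eq_mul, Finset.mul_sum,
    ← Finset.sum_add_distrib]
  exact Finset.sum_congr rfl fun i _ => pd_mul i hf (differentiableAt_pi.1 hu i)

theorem div3_const_smul (c : ℝ) (hu : DifferentiableAt ℝ u x) :
    div3 (fun y => c • u y) x = c * div3 u x := by
  simp only [div3, Pi.smul_apply, smul_eq_mul, Finset.mul_sum]
  exact Finset.sum_congr rfl fun i _ => pd_const_mul i c (differentiableAt_pi.1 hu i)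

theorem div3_cross (hu : DifferentiableAt ℝ u x) (hv : DifferentiableAt ℝ v x) :
    div3 (fun y => cross (u y) (v y)) x = dot (v x) (curl3 u x) - dot (u x) (curl3 v x) := by
  simp only [div3, curl3, dot, cross, Fin.sum_univ_three]
  simp (disch := fun_prop) only [Matrix.cons_val_zero, Matrix.cons_val_one, Matrix.cons_val_two,
    Matrix.head_cons, Matrix.tail_cons, pd_sub, pd_mul]
  ring

end Calculus

theorem hasDerivAt_timeSlice {E F : Type*} [NormedAddCommGroup E] [NormedSpace ℝ E]
    [NormedAddCommGroup F] [NormedSpace ℝ F] {f : ℝ × E → F} (hf : Differentiable ℝ f)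
    (t : ℝ) (x : E) : HasDerivAt (fun s => f (s, x)) (deriv (fun s => f (s, x)) t) t :=
  (hf.comp (differentiable_id.prodMk (differentiable_const x)) t).hasDerivAt

theorem HasDerivAt.dot {u v : ℝ → V3} {u' v' : V3} {t : ℝ} (hu : HasDerivAt u u' t)
    (hv : HasDerivAt v v' t) :
    HasDerivAt (fun s => dot (u s) (v s)) (dot u' (v t) + dot (u t) v') t := by
  have := HasDerivAt.fun_sum (u := Finset.univ) fun i _ =>
    (hasDerivAt_pi.1 hu i).fun_mul (hasDerivAt_pi.1 hv i)
  simpa only [_root_.dot, Finset.sum_add_distrib] using this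

theorem Periodic3.pd {f : V3 → ℝ} (hf : Periodic3 f) (i : Fin 3) : Periodic3 (pd i f) := by
  intro x k
  have hshift : (fun y => f (y + fun i => (k i : ℝ))) = f := funext fun y => hf y k
  simp only [_root_.pd, ← fderiv_comp_add_right, hshift]

theorem Periodic3.curl3 {u : V3 → V3} (hu : Periodic3 u) : Periodic3 (curl3 u) := by
  intro x k
  have hcomp : ∀ i j, _root_.pd i (fun y => u y j) (x + fun i => (k i : ℝ))
      = _root_.pd i (fun y => u y j) x :=
    fun i j => Periodic3.pd (fun x k => congrFun (hu x k) j) i x k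
  simp only [_root_.curl3, hcomp]

@[fun_prop] theorem ContDiff.pd {f : V3 → ℝ} (hf : ContDiff ℝ ∞ f) (i : Fin 3) :
    ContDiff ℝ ∞ (fun x => pd i f x) :=
  (hf.fderiv_right (by simp)).clm_apply contDiff_const

theorem ContDiff.curl3 {u : V3 → V3} (hu : ContDiff ℝ ∞ u) : ContDiff ℝ ∞ (curl3 u) :=
  contDiff_pi.2 fun i => by
    fin_cases i <;> simp only [_root_.curl3, Fin.zero_eta, Fin.mk_one, Fin.reduceFinMk,
      Matrix.cons_val_zero, Matrix.cons_val_one, Matrix.cons_val] <;> fun_prop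

theorem contDiff_Efield {V B : ℝ × V3 → V3} (μ₀ η : ℝ) (hV : ContDiff ℝ ∞ V)
    (hB : ContDiff ℝ ∞ B) (t : ℝ) : ContDiff ℝ ∞ (Efield μ₀ η V B t) := by
  have hcurl : ContDiff ℝ ∞ (curl3 fun y => B (t, y)) := ContDiff.curl3 (by fun_prop)
  unfold Efield jfield
  fun_prop

open Set in
theorem hasDerivAt_setIntegral_of_contDiff {E : Type*} [NormedAddCommGroup E] [NormedSpace ℝ E]
    [MeasurableSpace E] [OpensMeasurableSpace E] {μ : Measure E} [IsFiniteMeasureOnCompacts μ]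
    {K : Set E} (hK : IsCompact K) {f : ℝ × E → ℝ} (hf : ContDiff ℝ 1 f) (t : ℝ) :
    HasDerivAt (fun s => ∫ x in K, f (s, x) ∂μ) (∫ x in K, deriv (fun s => f (s, x)) t ∂μ) t := by
  set f' : ℝ × E → ℝ := fun p => fderiv ℝ f p (1, 0)
  have hf' : Continuous f' := (hf.continuous_fderiv one_ne_zero).clm_apply continuous_const
  have hslice : ∀ s x, HasDerivAt (fun s => f (s, x)) (f' (s, x)) s := fun s x =>
    (hf.differentiable one_ne_zero (s, x)).hasFDerivAt.comp_hasDerivAt s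
      ((hasDerivAt_id s).prodMk (hasDerivAt_const s x))
  obtain ⟨M, hM⟩ := (isCompact_Icc.prod hK).exists_bound_of_continuousOn
    (s := Icc (t - 1) (t + 1) ×ˢ K) hf'.continuousOn
  have hcont : ∀ {g : ℝ × E → ℝ}, Continuous g → ∀ s, Continuous fun x => g (s, x) :=
    fun hg s => hg.comp (continuous_const.prodMk continuous_id)
  have key := hasDerivAt_integral_of_dominated_loc_of_deriv_le (μ := μ.restrict K)
    (F := fun s x => f (s, x)) (F' := fun s x => f' (s, x)) (bound := fun _ => M)
    (Metric.ball_mem_nhds t one_pos)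
    (Filter.Eventually.of_forall fun s => (hcont hf.continuous s).aestronglyMeasurable)
    ((hcont hf.continuous t).continuousOn.integrableOn_compact hK)
    (hcont hf' t).aestronglyMeasurable
    (ae_restrict_of_forall_mem hK.measurableSet fun x hx s hs =>
      hM (s, x) ⟨Ioo_subset_Icc_self (Real.ball_eq_Ioo t 1 ▸ hs), hx⟩)
    (integrableOn_const hK.measure_lt_top.ne)
    (Filter.Eventually.of_forall fun x s _ => hslice s x)
  simpa only [fun x => (hslice t x).deriv] using key.2

theorem integral_div3_eq_zero_of_periodic {F : V3 → V3} (hF : ContDiff ℝ 1 F)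
    (hper : Periodic3 F) : ∫ x in Q3, div3 F x = 0 := by
  have hd : Differentiable ℝ F := hF.differentiable one_ne_zero
  have hdiv : div3 F = fun x => ∑ i, fderiv ℝ F x (Pi.single i 1) i :=
    funext fun x => Finset.sum_congr rfl fun i _ => pd_apply_eq_fderiv i i (hd x)
  have hshift : ∀ (i : Fin 3) (y : Fin 2 → ℝ),
      F (Fin.insertNth i 1 y) = F (Fin.insertNth i 0 y) := by
    intro i y
    convert hper (Fin.insertNth i 0 y) (Pi.single i 1) using 2
    ext j
    induction j using Fin.succAboveCases i <;> simp
  rw [hdiv, Q3, integral_divergence_of_hasFDerivAt_off_countable 0 1 zero_le_one F (fderiv ℝ F)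
    ∅ Set.countable_empty hF.continuous.continuousOn (fun x _ => (hd x).hasFDerivAt)
    (Continuous.integrableOn_Icc (by fun_prop))]
  exact Finset.sum_eq_zero fun i _ => by simp [hshift]

def energyFlux (n T : ℝ × V3 → ℝ) (V B : ℝ × V3 → V3) (mi μ₀ γ η t : ℝ) (y : V3) : V3 :=
  (1 / 2 * mi * dot (V (t, y)) (V (t, y))) • (n (t, y) • V (t, y))
    + (γ / (γ - 1) * (n (t, y) * T (t, y))) • V (t, y)
    + μ₀⁻¹ • cross (Efield μ₀ η V B t y) (B (t, y))

def energyDensity (n T : ℝ × V3 → ℝ) (V B : ℝ × V3 → V3) (mi μ₀ γ : ℝ) (p : ℝ × V3) : ℝ :=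
  1 / 2 * mi * n p * dot (V p) (V p) + n p * T p / (γ - 1) + dot (B p) (B p) / (2 * μ₀)

section EnergyBalance

variable {n T : ℝ × V3 → ℝ} {V B : ℝ × V3 → V3} {mi μ₀ γ η t : ℝ} {x : V3}

theorem kinetic_energy_balance {p f : V3}
    (hn : Differentiable ℝ n) (hV : Differentiable ℝ V) (hρ : mi * n (t, x) ≠ 0)
    (hcont : deriv (fun s => n (s, x)) t + div3 (fun y => n (t, y) • V (t, y)) x = 0)
    (hmom : deriv (fun s => V (s, x)) t + cross (curl3 (fun y => V (t, y)) x) (V (t, x))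
        + (1 / 2 : ℝ) • grad (fun y => dot (V (t, y)) (V (t, y))) x
        + (mi * n (t, x))⁻¹ • p - (mi * n (t, x))⁻¹ • f = 0) :
    deriv (fun s => 1 / 2 * mi * n (s, x) * dot (V (s, x)) (V (s, x))) t
      + div3 (fun y => (1 / 2 * mi * dot (V (t, y)) (V (t, y))) • (n (t, y) • V (t, y))) x
      = dot (V (t, x)) f - dot (V (t, x)) p := by
  have hVt := hasDerivAt_timeSlice hV t x
  rw [(((hasDerivAt_timeSlice hn t x).const_mul _).fun_mul (hVt.dot hVt)).deriv,
    div3_smul (by fun_prop) (by fun_prop), grad_const_mul _ (by fun_prop)]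
  have hmomV := congrArg (dot (V (t, x))) hmom
  simp only [dot_eq_dotProduct, cross_eq_crossProduct, dotProduct_add, dotProduct_sub,
    dotProduct_smul, smul_dotProduct, dot_cross_self, dotProduct_zero, smul_eq_mul] at hmomV ⊢
  rw [dotProduct_comm (deriv _ t), dotProduct_comm (grad _ x)]
  linear_combination (1 / 2 * mi * (V (t, x) ⬝ᵥ V (t, x))) * hcont + mi * n (t, x) * hmomV
    + (V (t, x) ⬝ᵥ f - V (t, x) ⬝ᵥ p) * mul_inv_cancel₀ hρ

theorem internal_energy_balance {q : ℝ}
    (hn : Differentiable ℝ n) (hT : Differentiable ℝ T) (hV : Differentiable ℝ V)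
    (hγ : γ - 1 ≠ 0)
    (hcont : deriv (fun s => n (s, x)) t + div3 (fun y => n (t, y) • V (t, y)) x = 0)
    (hheat : (n (t, x) / (γ - 1))
          * (deriv (fun s => T (s, x)) t + dot (V (t, x)) (grad (fun y => T (t, y)) x))
        + n (t, x) * T (t, x) * div3 (fun y => V (t, y)) x = q) :
    deriv (fun s => n (s, x) * T (s, x) / (γ - 1)) t
      + div3 (fun y => (γ / (γ - 1) * (n (t, y) * T (t, y))) • V (t, y)) x
      = dot (V (t, x)) (grad (fun y => n (t, y) * T (t, y)) x) + q := by
  rw [(((hasDerivAt_timeSlice hn t x).fun_mul (hasDerivAt_timeSlice hT t x)).div_const _).deriv,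
    div3_smul (by fun_prop) (by fun_prop), grad_const_mul _ (by fun_prop),
    grad_mul (by fun_prop) (by fun_prop)]
  rw [div3_smul (by fun_prop) (by fun_prop)] at hcont
  simp only [dot_eq_dotProduct, dotProduct_add, add_dotProduct, dotProduct_smul, smul_dotProduct,
    smul_eq_mul] at hcont hheat ⊢
  rw [dotProduct_comm (V (t, x)) (grad (fun y => T (t, y)) x)] at hheat ⊢
  rw [dotProduct_comm (V (t, x)) (grad (fun y => n (t, y)) x)]
  linear_combination T (t, x) / (γ - 1) * hcont + hheat
    + (T (t, x) * (grad (fun y => n (t, y)) x ⬝ᵥ V (t, x))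
      + n (t, x) * (grad (fun y => T (t, y)) x ⬝ᵥ V (t, x))
      + n (t, x) * T (t, x) * div3 (fun y => V (t, y)) x) * mul_inv_cancel₀ hγ

theorem magnetic_energy_balance {E : V3 → V3}
    (hB : Differentiable ℝ B) (hE : DifferentiableAt ℝ E x)
    (hfar : deriv (fun s => B (s, x)) t + curl3 E x = 0) :
    deriv (fun s => dot (B (s, x)) (B (s, x)) / (2 * μ₀)) t
      + div3 (fun y => μ₀⁻¹ • cross (E y) (B (t, y))) x = - dot (E x) (jfield μ₀ B t x) := by
  have hBt := hasDerivAt_timeSlice hB t x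
  rw [((hBt.dot hBt).div_const _).deriv, div3_const_smul _ (by fun_prop),
    div3_cross hE (by fun_prop)]
  have hfarB := congrArg (dot (B (t, x))) hfar
  simp only [jfield, dot_eq_dotProduct, dotProduct_add, dotProduct_smul, dotProduct_zero,
    smul_eq_mul] at hfarB ⊢
  rw [dotProduct_comm (deriv _ t)]
  linear_combination μ₀⁻¹ * hfarB

theorem periodic3_energyFlux (hnper : ∀ t, Periodic3 (fun x => n (t, x)))
    (hTper : ∀ t, Periodic3 (fun x => T (t, x))) (hVper : ∀ t, Periodic3 (fun x => V (t, x)))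
    (hBper : ∀ t, Periodic3 (fun x => B (t, x))) (t : ℝ) :
    Periodic3 (energyFlux n T V B mi μ₀ γ η t) := by
  intro x k
  simp only [energyFlux, Efield, jfield, hnper t x k, hTper t x k, hVper t x k, hBper t x k,
    (hBper t).curl3 x k]

theorem contDiff_energyFlux (hn : ContDiff ℝ ∞ n) (hT : ContDiff ℝ ∞ T) (hV : ContDiff ℝ ∞ V)
    (hB : ContDiff ℝ ∞ B) (t : ℝ) : ContDiff ℝ ∞ (energyFlux n T V B mi μ₀ γ η t) := by
  have hE := contDiff_Efield μ₀ η hV hB t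
  unfold energyFlux
  fun_prop

theorem contDiff_energyDensity (hn : ContDiff ℝ ∞ n) (hT : ContDiff ℝ ∞ T)
    (hV : ContDiff ℝ ∞ V) (hB : ContDiff ℝ ∞ B) :
    ContDiff ℝ ∞ (energyDensity n T V B mi μ₀ γ) := by
  unfold energyDensity
  fun_prop

theorem local_energy_conservation (hn : ContDiff ℝ ∞ n) (hT : ContDiff ℝ ∞ T)
    (hV : ContDiff ℝ ∞ V) (hB : ContDiff ℝ ∞ B) (hρ : mi * n (t, x) ≠ 0) (hγ : γ - 1 ≠ 0)
    (hcont : deriv (fun s => n (s, x)) t + div3 (fun y => n (t, y) • V (t, y)) x = 0)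
    (hmom : deriv (fun s => V (s, x)) t
        + cross (curl3 (fun y => V (t, y)) x) (V (t, x))
        + (1 / 2 : ℝ) • grad (fun y => dot (V (t, y)) (V (t, y))) x
        + (mi * n (t, x))⁻¹ • grad (fun y => n (t, y) * T (t, y)) x
        - (mi * n (t, x))⁻¹ • cross (jfield μ₀ B t x) (B (t, x)) = 0)
    (hheat : (n (t, x) / (γ - 1))
          * (deriv (fun s => T (s, x)) t + dot (V (t, x)) (grad (fun y => T (t, y)) x))
        + n (t, x) * T (t, x) * div3 (fun y => V (t, y)) x
        = η * dot (jfield μ₀ B t x) (jfield μ₀ B t x))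
    (hfar : deriv (fun s => B (s, x)) t + curl3 (fun y => Efield μ₀ η V B t y) x = 0) :
    deriv (fun s => energyDensity n T V B mi μ₀ γ (s, x)) t
      + div3 (energyFlux n T V B mi μ₀ γ η t) x = 0 := by
  have hn' : Differentiable ℝ n := hn.differentiable (by simp)
  have hT' : Differentiable ℝ T := hT.differentiable (by simp)
  have hV' : Differentiable ℝ V := hV.differentiable (by simp)
  have hB' : Differentiable ℝ B := hB.differentiable (by simp)
  have hE : Differentiable ℝ (Efield μ₀ η V B t) :=
    (contDiff_Efield μ₀ η hV hB t).differentiable (by simp)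
  have hkin := kinetic_energy_balance hn' hV' hρ hcont hmom
  have hint := internal_energy_balance hn' hT' hV' hγ hcont hheat
  have hmag := magnetic_energy_balance (μ₀ := μ₀) hB' (hE x) hfar
  have hdensity : deriv (fun s => energyDensity n T V B mi μ₀ γ (s, x)) t
      = deriv (fun s => 1 / 2 * mi * n (s, x) * dot (V (s, x)) (V (s, x))) t
        + deriv (fun s => n (s, x) * T (s, x) / (γ - 1)) t
        + deriv (fun s => dot (B (s, x)) (B (s, x)) / (2 * μ₀)) t := by
    unfold energyDensity
    rw [deriv_fun_add (by fun_prop) (by fun_prop), deriv_fun_add (by fun_prop) (by fun_prop)]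
  have hflux : div3 (energyFlux n T V B mi μ₀ γ η t) x
      = div3 (fun y => (1 / 2 * mi * dot (V (t, y)) (V (t, y))) • (n (t, y) • V (t, y))) x
        + div3 (fun y => (γ / (γ - 1) * (n (t, y) * T (t, y))) • V (t, y)) x
        + div3 (fun y => μ₀⁻¹ • cross (Efield μ₀ η V B t y) (B (t, y))) x := by
    unfold energyFlux
    rw [div3_add (by fun_prop) (by fun_prop), div3_add (by fun_prop) (by fun_prop)]
  rw [hdensity, hflux]
  rw [dot_Efield_jfield] at hmag
  linear_combination hkin + hint + hmag

end EnergyBalance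

theorem total_energy_conservation_general
    (n T : ℝ × V3 → ℝ) (V B : ℝ × V3 → V3)
    (mi μ₀ γ η : ℝ)
    (hn : ContDiff ℝ (⊤ : ℕ∞) n) (hT : ContDiff ℝ (⊤ : ℕ∞) T)
    (hV : ContDiff ℝ (⊤ : ℕ∞) V) (hB : ContDiff ℝ (⊤ : ℕ∞) B)
    (hnper : ∀ t, Periodic3 (fun x => n (t, x)))
    (hTper : ∀ t, Periodic3 (fun x => T (t, x)))
    (hVper : ∀ t, Periodic3 (fun x => V (t, x)))
    (hBper : ∀ t, Periodic3 (fun x => B (t, x)))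
    (hnpos : ∀ t x, 0 < n (t, x))
    (hmi : 0 < mi) (hγ : 1 < γ)
    (heq1 : ∀ t x, deriv (fun s => n (s, x)) t
        + div3 (fun y => n (t, y) • V (t, y)) x = 0)
    (heq2 : ∀ t x, deriv (fun s => V (s, x)) t
        + cross (curl3 (fun y => V (t, y)) x) (V (t, x))
        + (1 / 2 : ℝ) • grad (fun y => dot (V (t, y)) (V (t, y))) x
        + (mi * n (t, x))⁻¹ • grad (fun y => n (t, y) * T (t, y)) x
        - (mi * n (t, x))⁻¹ • cross (jfield μ₀ B t x) (B (t, x)) = 0)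
    (heq3 : ∀ t x, (n (t, x) / (γ - 1))
          * (deriv (fun s => T (s, x)) t
              + dot (V (t, x)) (grad (fun y => T (t, y)) x))
        + n (t, x) * T (t, x) * div3 (fun y => V (t, y)) x
        = η * dot (jfield μ₀ B t x) (jfield μ₀ B t x))
    (heq4 : ∀ t x, deriv (fun s => B (s, x)) t
        + curl3 (fun y => Efield μ₀ η V B t y) x = 0) :
    ∀ t, deriv (fun s => ∫ x in Q3,
        ((1 / 2 : ℝ) * mi * n (s, x) * dot (V (s, x)) (V (s, x))
          + n (s, x) * T (s, x) / (γ - 1)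
          + dot (B (s, x)) (B (s, x)) / (2 * μ₀))) t = 0 := by
  intro t
  have hlocal : ∀ x, deriv (fun s => energyDensity n T V B mi μ₀ γ (s, x)) t
      = - div3 (energyFlux n T V B mi μ₀ γ η t) x := fun x =>
    eq_neg_of_add_eq_zero_left <| local_energy_conservation hn hT hV hB
      (mul_pos hmi (hnpos t x)).ne' (sub_pos.2 hγ).ne' (heq1 t x) (heq2 t x) (heq3 t x) (heq4 t x)
  refine (hasDerivAt_setIntegral_of_contDiff (isCompact_Icc : IsCompact Q3)
    ((contDiff_energyDensity hn hT hV hB).of_le (by simp)) t).deriv.trans ?_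
  simp only [hlocal, integral_neg, neg_eq_zero]
  exact integral_div3_eq_zero_of_periodic ((contDiff_energyFlux hn hT hV hB t).of_le (by simp))
    (periodic3_energyFlux hnper hTper hVper hBper t)

/-- Proposition 1a: conservation of total energy for resistive compressible MHD,
spatially periodic setting. -/
theorem total_energy_conservation
    (n T : ℝ × V3 → ℝ) (V B : ℝ × V3 → V3)
    (mi μ₀ γ η : ℝ)
    (hn : ContDiff ℝ (⊤ : ℕ∞) n) (hT : ContDiff ℝ (⊤ : ℕ∞) T)
    (hV : ContDiff ℝ (⊤ : ℕ∞) V) (hB : ContDiff ℝ (⊤ : ℕ∞) B)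
    (hnper : ∀ t, Periodic3 (fun x => n (t, x)))
    (hTper : ∀ t, Periodic3 (fun x => T (t, x)))
    (hVper : ∀ t, Periodic3 (fun x => V (t, x)))
    (hBper : ∀ t, Periodic3 (fun x => B (t, x)))
    (hnpos : ∀ t x, 0 < n (t, x))
    (hmi : 0 < mi) (hμ : 0 < μ₀) (hγ : 1 < γ) (hη : 0 ≤ η)
    (heq1 : ∀ t x, deriv (fun s => n (s, x)) t
        + div3 (fun y => n (t, y) • V (t, y)) x = 0)
    (heq2 : ∀ t x, deriv (fun s => V (s, x)) t
        + cross (curl3 (fun y => V (t, y)) x) (V (t, x))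
        + (1 / 2 : ℝ) • grad (fun y => dot (V (t, y)) (V (t, y))) x
        + (mi * n (t, x))⁻¹ • grad (fun y => n (t, y) * T (t, y)) x
        - (mi * n (t, x))⁻¹ • cross (jfield μ₀ B t x) (B (t, x)) = 0)
    (heq3 : ∀ t x, (n (t, x) / (γ - 1))
          * (deriv (fun s => T (s, x)) t
              + dot (V (t, x)) (grad (fun y => T (t, y)) x))
        + n (t, x) * T (t, x) * div3 (fun y => V (t, y)) x
        = η * dot (jfield μ₀ B t x) (jfield μ₀ B t x))
    (heq4 : ∀ t x, deriv (fun s => B (s, x)) t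
        + curl3 (fun y => Efield μ₀ η V B t y) x = 0) :
    ∀ t, deriv (fun s => ∫ x in Q3,
        ((1 / 2 : ℝ) * mi * n (s, x) * dot (V (s, x)) (V (s, x))
          + n (s, x) * T (s, x) / (γ - 1)
          + dot (B (s, x)) (B (s, x)) / (2 * μ₀))) t = 0 :=
  total_energy_conservation_general n T V B mi μ₀ γ η hn hT hV hB hnper hTper hVper hBper hnpos hmi
    hγ heq1 heq2 heq3 heq4
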